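/- arXiv:2601.05795 — 2 statements merged into one kernel-verified Lean document; each statement's English description precedes it below -/
import Mathlib

section
/- Let K₁ and K* be normalized circle quadruples, Q* = Q(K₁,K*), and define K₂ componentwise by K₂ = 2(1−2Q*)·K* − K₁, i.e., (a₂,b₂,c₂,d₂) = (2(1−2Q*)a*−a₁, 2(1−2Q*)b*−b₁, 2(1−2Q*)c*−c₁, 2(1−2Q*)d*−d₁). Then K₂ is a normalized circle quadruple (it represents the image of the circle K₁ under inversion in the circle K*). -/
/-! Circle quadruples are vectors of the quadratic form `b² + c² - a d` on `ℝ⁴`, normalized ones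
having value `1`. Its polar form at `(K₁, K*)` is `2 (1 - 2 Q*)`, so `K₂` is the image of `K₁`
under `x ↦ polar x K* • K* - x`, which is minus the reflection in the unit vector `K*` and hence
preserves the form. -/

open QuadraticMap

theorem QuadraticMap.map_polar_smul_sub_of_eq_one {R M : Type*} [CommRing R] [AddCommGroup M]
    [Module R M] (Q : QuadraticForm R M) {v : M} (hv : Q v = 1) (x : M) :
    Q (polar Q x v • v - x) = Q x := by
  rw [sub_eq_add_neg, QuadraticMap.map_add Q, Q.map_smul, Q.map_neg, hv, polar_neg_right,
    polar_smul_left, polar_comm Q v x]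
  simp only [smul_eq_mul]
  ring

def circleForm : QuadraticForm ℝ (Fin 4 → ℝ) :=
  linMulLin (.proj 1) (.proj 1) + linMulLin (.proj 2) (.proj 2) - linMulLin (.proj 0) (.proj 3)

theorem circleForm_apply (K : Fin 4 → ℝ) : circleForm K = K 1 ^ 2 + K 2 ^ 2 - K 0 * K 3 := by
  simp only [circleForm, sub_apply, add_apply, linMulLin_apply, LinearMap.coe_proj, Function.eval]
  ring

theorem polar_circleForm (K L : Fin 4 → ℝ) :
    polar circleForm K L = 2 * (K 1 * L 1 + K 2 * L 2) - (K 0 * L 3 + L 0 * K 3) := by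
  simp only [polar, circleForm_apply, Pi.add_apply]
  ring

theorem stmt_12
    (a₁ b₁ c₁ d₁ a b c d : ℝ)
    (h₁ : b₁^2 + c₁^2 - a₁*d₁ = 1)
    (h : b^2 + c^2 - a*d = 1)
    (Q : ℝ)
    (hQ : 4*Q = 2 + a₁*d + a*d₁ - 2*(b₁*b + c₁*c))
    (a₂ b₂ c₂ d₂ : ℝ)
    (ha₂ : a₂ = 2*(1-2*Q)*a - a₁)
    (hb₂ : b₂ = 2*(1-2*Q)*b - b₁)
    (hc₂ : c₂ = 2*(1-2*Q)*c - c₁)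
    (hd₂ : d₂ = 2*(1-2*Q)*d - d₁) :
    b₂^2 + c₂^2 - a₂*d₂ = 1 := by
  have hK : circleForm ![a, b, c, d] = 1 := by simpa [circleForm_apply] using h
  have hpolar : polar circleForm ![a₁, b₁, c₁, d₁] ![a, b, c, d] = 2 * (1 - 2 * Q) := by
    simp only [polar_circleForm, Fin.isValue, Matrix.cons_val_one, Matrix.cons_val_zero,
      Matrix.cons_val]
    linarith
  have key := circleForm.map_polar_smul_sub_of_eq_one hK ![a₁, b₁, c₁, d₁]
  rw [hpolar] at key
  simpa [circleForm_apply, ha₂, hb₂, hc₂, hd₂, h₁] using key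
end

section
/- For any three normalized circle quadruples K₁, K₂, K₃, one has 4G = 4W + Δ₄², where G = Q₁(a₁−a₃)(a₂−a₃) + Q₂(a₂−a₁)(a₃−a₁) + Q₃(a₃−a₂)(a₁−a₂). Equivalently, for every real t: W·t² − (1/4)·Δ₄²·(1−t²) = G·t² − (1/4)·Δ₄². -/
/-!
In coordinates `(a, b, c, d)` the bilinear form `2(b b' + c c') - (a d' + a' d)` has determinant
`-4`. On normalized quadruples it takes the value `2`, and `2 - 4 Q(K, L)` on a pair; the quadruple
`(0, 0, 0, 1)` of the point at infinity is isotropic and pairs with `K` to `-a`. Hence the Gram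
determinant of `K₁, K₂, K₃, ∞` is, on the one hand, `-4` times the square of the coordinate
determinant, which is `Δ₄`, and on the other hand, expanded in `Q` and `a`, it is `16 (W - G)`.
-/

open Matrix

variable {R : Type*} [CommRing R]

theorem Matrix.det_mul_mul_transpose {n : Type*} [Fintype n] [DecidableEq n]
    (M A : Matrix n n R) : (M * A * Mᵀ).det = M.det ^ 2 * A.det := by
  rw [det_mul, det_mul, det_transpose]
  ring

def inversiveForm (R : Type*) [CommRing R] : Matrix (Fin 4) (Fin 4) R :=
  !![0, 0, 0, -1; 0, 2, 0, 0; 0, 0, 2, 0; -1, 0, 0, 0]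

theorem det_inversiveForm : (inversiveForm R).det = -4 := by
  simp [inversiveForm, det_succ_row_zero, Fin.sum_univ_succ, Fin.succAbove]
  norm_num

def quadruplesMatrix (a₁ b₁ c₁ d₁ a₂ b₂ c₂ d₂ a₃ b₃ c₃ d₃ : R) : Matrix (Fin 4) (Fin 4) R :=
  !![a₁, b₁, c₁, d₁; a₂, b₂, c₂, d₂; a₃, b₃, c₃, d₃; 0, 0, 0, 1]

theorem det_quadruplesMatrix (a₁ b₁ c₁ d₁ a₂ b₂ c₂ d₂ a₃ b₃ c₃ d₃ : R) :
    (quadruplesMatrix a₁ b₁ c₁ d₁ a₂ b₂ c₂ d₂ a₃ b₃ c₃ d₃).det =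
      (!![a₁, b₁, c₁; a₂, b₂, c₂; a₃, b₃, c₃] : Matrix (Fin 3) (Fin 3) R).det := by
  simp [quadruplesMatrix, det_succ_row_zero, Fin.sum_univ_succ, Fin.succAbove]

def inversiveGram (a₁ a₂ a₃ Q₁ Q₂ Q₃ : R) : Matrix (Fin 4) (Fin 4) R :=
  !![2, 2 - 4*Q₁, 2 - 4*Q₃, -a₁;
     2 - 4*Q₁, 2, 2 - 4*Q₂, -a₂;
     2 - 4*Q₃, 2 - 4*Q₂, 2, -a₃;
     -a₁, -a₂, -a₃, 0]

theorem det_inversiveGram (a₁ a₂ a₃ Q₁ Q₂ Q₃ : R) :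
    (inversiveGram a₁ a₂ a₃ Q₁ Q₂ Q₃).det =
      16 * ((a₁*Q₂*(a₁*Q₂-2*a₂*Q₃) + a₂*Q₃*(a₂*Q₃-2*a₃*Q₁) + a₃*Q₁*(a₃*Q₁-2*a₁*Q₂))
        - (Q₁*(a₁-a₃)*(a₂-a₃) + Q₂*(a₂-a₁)*(a₃-a₁) + Q₃*(a₃-a₂)*(a₁-a₂))) := by
  simp [inversiveGram, det_succ_row_zero, Fin.sum_univ_succ, Fin.succAbove]
  ring

theorem quadruplesMatrix_mul_inversiveForm_mul_transpose
    {a₁ b₁ c₁ d₁ a₂ b₂ c₂ d₂ a₃ b₃ c₃ d₃ Q₁ Q₂ Q₃ : R}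
    (h₁ : b₁^2 + c₁^2 - a₁*d₁ = 1)
    (h₂ : b₂^2 + c₂^2 - a₂*d₂ = 1)
    (h₃ : b₃^2 + c₃^2 - a₃*d₃ = 1)
    (hQ₁ : 4*Q₁ = 2 + a₁*d₂ + a₂*d₁ - 2*(b₁*b₂ + c₁*c₂))
    (hQ₂ : 4*Q₂ = 2 + a₂*d₃ + a₃*d₂ - 2*(b₂*b₃ + c₂*c₃))
    (hQ₃ : 4*Q₃ = 2 + a₃*d₁ + a₁*d₃ - 2*(b₃*b₁ + c₃*c₁)) :
    let M := quadruplesMatrix a₁ b₁ c₁ d₁ a₂ b₂ c₂ d₂ a₃ b₃ c₃ d₃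
    M * inversiveForm R * Mᵀ = inversiveGram a₁ a₂ a₃ Q₁ Q₂ Q₃ := by
  ext i j
  fin_cases i <;> fin_cases j <;>
    simp [quadruplesMatrix, inversiveForm, inversiveGram, mul_apply, Fin.sum_univ_succ] <;>
    first
      | ring1
      | linear_combination 2 * h₁ | linear_combination 2 * h₂ | linear_combination 2 * h₃
      | linear_combination hQ₁ | linear_combination hQ₂ | linear_combination hQ₃

theorem stmt_14
    (a₁ b₁ c₁ d₁ a₂ b₂ c₂ d₂ a₃ b₃ c₃ d₃ : ℝ)
    (h₁ : b₁^2 + c₁^2 - a₁*d₁ = 1)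
    (h₂ : b₂^2 + c₂^2 - a₂*d₂ = 1)
    (h₃ : b₃^2 + c₃^2 - a₃*d₃ = 1)
    (Q₁ Q₂ Q₃ : ℝ)
    (hQ₁ : 4*Q₁ = 2 + a₁*d₂ + a₂*d₁ - 2*(b₁*b₂ + c₁*c₂))
    (hQ₂ : 4*Q₂ = 2 + a₂*d₃ + a₃*d₂ - 2*(b₂*b₃ + c₂*c₃))
    (hQ₃ : 4*Q₃ = 2 + a₃*d₁ + a₁*d₃ - 2*(b₃*b₁ + c₃*c₁))
    (W : ℝ)
    (hW : W = a₁*Q₂*(a₁*Q₂-2*a₂*Q₃) + a₂*Q₃*(a₂*Q₃-2*a₃*Q₁) + a₃*Q₁*(a₃*Q₁-2*a₁*Q₂))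
    (Δ₄ : ℝ)
    (hΔ₄ : Δ₄ = Matrix.det !![a₁,b₁,c₁; a₂,b₂,c₂; a₃,b₃,c₃])
    (G : ℝ)
    (hG : G = Q₁*(a₁-a₃)*(a₂-a₃) + Q₂*(a₂-a₁)*(a₃-a₁) + Q₃*(a₃-a₂)*(a₁-a₂)) :
    4*G = 4*W + Δ₄^2 ∧
    (∀ t : ℝ, W*t^2 - (1/4)*Δ₄^2*(1-t^2) = G*t^2 - (1/4)*Δ₄^2) := by
  have gram_det := congrArg det
    (quadruplesMatrix_mul_inversiveForm_mul_transpose h₁ h₂ h₃ hQ₁ hQ₂ hQ₃)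
  rw [det_mul_mul_transpose, det_inversiveForm, det_quadruplesMatrix, ← hΔ₄,
    det_inversiveGram, ← hW, ← hG] at gram_det
  have key : 4*G = 4*W + Δ₄^2 := by linear_combination gram_det / 4
  exact ⟨key, fun t => by linear_combination (-t^2/4) * key⟩
end
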